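/- arXiv:1107.1886 — 3 statements merged into one kernel-verified Lean document; each statement's English description precedes it below -/
import Mathlib

section
/- (Lower bound on packet decoding error) Let E[1],…,E[n] be i.i.d. Bernoulli(β) with n = k/(1-2x) for x ∈ (β, 1/2). Then P(∑_{i=1}^n E[i] > n x) ≥ (β/(1-β)) · exp(-(k/(1-2x)) H(B(x))) · exp(-(k/(1-2x)) D(B(x)‖B(β))), where B(p) denotes the Bernoulli(p) distribution, H is its entropy, and D is the Kullback–Leibler divergence. -/
open MeasureTheory ENNReal Finset

/-- Entropy of the Bernoulli distribution `B(x)` (natural logarithm). -/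
noncomputable def binEnt (x : ℝ) : ℝ := -x * Real.log x - (1 - x) * Real.log (1 - x)

/-- Kullback–Leibler divergence `D(B(x) ‖ B(β))` between Bernoulli distributions. -/
noncomputable def binKL (x β : ℝ) : ℝ :=
  x * Real.log (x / β) + (1 - x) * Real.log ((1 - x) / (1 - β))

/-!
The event contains each outcome with exactly `m = ⌊n x⌋₊ + 1` successes, and such an
outcome has probability `β ^ m (1 - β) ^ (n - m)`. Since `H(B(x)) + D(B(x)‖B(β))` is the cross
entropy `-x log β - (1 - x) log (1 - β)`, the claimed bound equals `(1 - β) ^ n r ^ (n x + 1)` with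
`r = β / (1 - β) ≤ 1`, which is at most `(1 - β) ^ n r ^ m = β ^ m (1 - β) ^ (n - m)`.
-/

open scoped NNReal

set_option linter.deprecated false

theorem PMF.bernoulli_pi_singleton {ι : Type*} [Fintype ι] (p : ℝ≥0) (h : p ≤ 1)
    (ω : ι → Bool) :
    Measure.pi (fun _ : ι => (PMF.bernoulli p h).toMeasure) {ω}
      = (p : ℝ≥0∞) ^ #{i | ω i} * (1 - p : ℝ≥0∞) ^ #{i | ¬ ω i} := by
  rw [← Set.univ_pi_singleton, Measure.pi_pi]
  simp only [PMF.toMeasure_apply_singleton _ _ (measurableSet_singleton _), PMF.bernoulli_apply]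
  rw [← Finset.prod_const, ← Finset.prod_const, ← Finset.prod_ite]
  simp [Bool.cond_eq_ite, apply_ite ENNReal.ofNNReal, ENNReal.coe_sub]

theorem PMF.pow_mul_pow_le_bernoulli_pi_count_gt (p : ℝ≥0) (h : p ≤ 1) {n m : ℕ}
    (hmn : m ≤ n) {t : ℝ} (ht : t < m) :
    (p : ℝ≥0∞) ^ m * (1 - p : ℝ≥0∞) ^ (n - m)
      ≤ Measure.pi (fun _ : Fin n => (PMF.bernoulli p h).toMeasure)
          {ω | (∑ i, if ω i then (1 : ℝ) else 0) > t} := by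
  obtain ⟨s, -, hs⟩ := exists_subset_card_eq (s := (univ : Finset (Fin n))) (by simpa using hmn)
  have hcount : #{i | decide (i ∈ s) = true} = m := by simpa using hs
  have hcount_compl : #{i | ¬ decide (i ∈ s) = true} = n - m := by
    simpa [← compl_filter, card_compl] using congrArg (n - ·) hcount
  calc (p : ℝ≥0∞) ^ m * (1 - p : ℝ≥0∞) ^ (n - m)
      = Measure.pi (fun _ : Fin n => (PMF.bernoulli p h).toMeasure) {fun i => decide (i ∈ s)} := by
        rw [PMF.bernoulli_pi_singleton, hcount, hcount_compl]
    _ ≤ _ := measure_mono <| by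
        rintro _ rfl
        simpa [sum_boole, hs] using ht

theorem binEnt_add_binKL {x β : ℝ} (hx0 : x ≠ 0) (hx1 : x ≠ 1) (hβ0 : β ≠ 0) (hβ1 : β ≠ 1) :
    binEnt x + binKL x β = -(x * Real.log β + (1 - x) * Real.log (1 - β)) := by
  rw [binEnt, binKL, Real.log_div hx0 hβ0,
    Real.log_div (sub_ne_zero.2 hx1.symm) (sub_ne_zero.2 hβ1.symm)]
  ring

theorem div_mul_exp_neg_binEnt_mul_exp_neg_binKL_le {x β : ℝ} (hx0 : 0 < x) (hx1 : x < 1)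
    (hβ0 : 0 < β) (hβ : β ≤ 1 / 2) {n m : ℕ} (hmn : m ≤ n) (hm : (m : ℝ) ≤ n * x + 1) :
    β / (1 - β) * Real.exp (-n * binEnt x) * Real.exp (-n * binKL x β)
      ≤ β ^ m * (1 - β) ^ (n - m) := by
  have h1β : 0 < 1 - β := by linarith
  have hlog : Real.log β ≤ Real.log (1 - β) := Real.log_le_log hβ0 (by linarith)
  calc β / (1 - β) * Real.exp (-n * binEnt x) * Real.exp (-n * binKL x β)
      = Real.exp (Real.log (β / (1 - β)) - n * (binEnt x + binKL x β)) := by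
        rw [← Real.exp_log (div_pos hβ0 h1β), ← Real.exp_add, ← Real.exp_add, Real.log_exp]
        ring_nf
    _ ≤ Real.exp (m * Real.log β + (n - m : ℕ) * Real.log (1 - β)) := by
        gcongr
        rw [binEnt_add_binKL hx0.ne' hx1.ne hβ0.ne' (by linarith), Real.log_div hβ0.ne' h1β.ne',
          Nat.cast_sub hmn]
        nlinarith
    _ = β ^ m * (1 - β) ^ (n - m) := by
        rw [Real.exp_add, Real.exp_nat_mul, Real.exp_nat_mul, Real.exp_log hβ0, Real.exp_log h1β]

/-- Lower bound on the packet decoding error: for `E[1], …, E[n]` i.i.d. Bernoulli(β) with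
`n = k/(1-2x)` and `β < x < 1/2`,
`P(∑ E[i] > n x) ≥ (β/(1-β)) exp(-(k/(1-2x)) H(B(x))) exp(-(k/(1-2x)) D(B(x)‖B(β)))`. -/
theorem packet_error_lower_bound (k β x : ℝ) (n : ℕ)
    (hβ0 : 0 < β) (hβx : β < x) (hx : x < 1 / 2) (hk : 0 < k)
    (hn : (n : ℝ) = k / (1 - 2 * x)) :
    (Measure.pi fun _ : Fin n =>
        ((PMF.bernoulli (Real.toNNReal β)
            (by simpa using Real.toNNReal_le_one.mpr (by linarith : β ≤ 1))).toMeasure))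
      {ω : Fin n → Bool | (∑ i, if ω i then (1:ℝ) else 0) > (n : ℝ) * x}
      ≥ ENNReal.ofReal
          (β / (1 - β) * Real.exp (-(k / (1 - 2 * x)) * binEnt x)
            * Real.exp (-(k / (1 - 2 * x)) * binKL x β)) := by
  have hx0 : 0 < x := hβ0.trans hβx
  have hnx0 : 0 ≤ (n : ℝ) * x := by positivity
  have hnx : (n : ℝ) * x < n := by
    have : 0 < (n : ℝ) := hn ▸ div_pos hk (by linarith)
    nlinarith
  set m := ⌊(n : ℝ) * x⌋₊ + 1
  have hm_gt : (n : ℝ) * x < m := by push_cast [m]; exact Nat.lt_floor_add_one _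
  have hm_le : (m : ℝ) ≤ n * x + 1 := by push_cast [m]; linarith [Nat.floor_le hnx0]
  have hmn : m ≤ n := Nat.floor_lt hnx0 |>.2 hnx
  rw [← hn, ge_iff_le]
  calc ENNReal.ofReal (β / (1 - β) * Real.exp (-n * binEnt x) * Real.exp (-n * binKL x β))
      ≤ ENNReal.ofReal (β ^ m * (1 - β) ^ (n - m)) := ENNReal.ofReal_le_ofReal <|
        div_mul_exp_neg_binEnt_mul_exp_neg_binKL_le hx0 (by linarith) hβ0 (by linarith) hmn hm_le
    _ = (β.toNNReal : ℝ≥0∞) ^ m * (1 - β.toNNReal : ℝ≥0∞) ^ (n - m) := by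
        rw [ENNReal.ofReal_mul (by positivity), ENNReal.ofReal_pow hβ0.le,
          ENNReal.ofReal_pow (by linarith), ENNReal.ofReal_sub _ hβ0.le, ENNReal.ofReal_one]
        rfl
    _ ≤ _ := PMF.pow_mul_pow_le_bernoulli_pi_count_gt _ _ hmn hm_gt
end

section
/- For 0 < β < x < 1/2 with x(1-x) > β(1-β), the function e(x) = exp(-(k/(1-2x)) D(B(x)‖B(β))) is convex at x whenever k ≥ 4(1-2x)/Λ(x) + (1-2x)³/(x(1-x)Λ(x)²), where Λ(x) = ln(x(1-x)/(β(1-β))) > 0. -/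
open Real Filter Topology

-- The paper's `Λ`.
noncomputable def logVarRatio (β y : ℝ) : ℝ :=
  log (y * (1 - y) / (β * (1 - β)))

theorem deriv_deriv_exp_comp {g g' : ℝ → ℝ} {g'' x : ℝ}
    (hg : ∀ᶠ y in 𝓝 x, HasDerivAt g (g' y) y) (hg' : HasDerivAt g' g'' x) :
    deriv (deriv fun y => exp (g y)) x = exp (g x) * (g' x ^ 2 + g'') := by
  have hderiv : deriv (fun y => exp (g y)) =ᶠ[𝓝 x] fun y => exp (g y) * g' y := by
    filter_upwards [hg] with y hy
    exact hy.exp.deriv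
  rw [hderiv.deriv_eq, (hg.self_of_nhds.exp.fun_mul hg').deriv]
  ring

section Derivatives

variable {β k y : ℝ}

theorem hasDerivAt_one_sub_two_mul (y : ℝ) : HasDerivAt (fun t => 1 - 2 * t) (-2) y := by
  simpa using ((hasDerivAt_id' y).const_mul 2).const_sub 1

theorem hasDerivAt_binKL (hy : y ≠ 0) (hy' : 1 - y ≠ 0) (hβ : β ≠ 0) (hβ' : 1 - β ≠ 0) :
    HasDerivAt (fun t => binKL t β) (log (y / β) - log ((1 - y) / (1 - β))) y := by
  have hlog₁ : HasDerivAt (fun t => log (t / β)) (1 / β / (y / β)) y :=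
    ((hasDerivAt_id' y).div_const β).log (div_ne_zero hy hβ)
  have hlog₂ : HasDerivAt (fun t => log ((1 - t) / (1 - β)))
      (-1 / (1 - β) / ((1 - y) / (1 - β))) y :=
    (((hasDerivAt_id' y).const_sub 1).div_const (1 - β)).log (div_ne_zero hy' hβ')
  refine (((hasDerivAt_id' y).fun_mul hlog₁).fun_add
    (((hasDerivAt_id' y).const_sub 1).fun_mul hlog₂)).congr_deriv ?_
  field_simp
  ring

theorem hasDerivAt_logVarRatio (hy : y ≠ 0) (hy' : 1 - y ≠ 0) (hβ : β ≠ 0)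
    (hβ' : 1 - β ≠ 0) :
    HasDerivAt (logVarRatio β) ((1 - 2 * y) / (y * (1 - y))) y := by
  have hquot : HasDerivAt (fun t => t * (1 - t) / (β * (1 - β)))
      ((1 - 2 * y) / (β * (1 - β))) y := by
    refine (((hasDerivAt_id' y).fun_mul ((hasDerivAt_id' y).const_sub 1)).div_const
      (β * (1 - β))).congr_deriv ?_
    ring
  unfold logVarRatio
  refine (hquot.log (by positivity)).congr_deriv ?_
  field_simp

theorem hasDerivAt_neg_div_mul_binKL (hy : y ≠ 0) (hy' : 1 - y ≠ 0) (hβ : β ≠ 0)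
    (hβ' : 1 - β ≠ 0) (hc : 1 - 2 * y ≠ 0) :
    HasDerivAt (fun t => -(k / (1 - 2 * t)) * binKL t β)
      (-(k * logVarRatio β y) / (1 - 2 * y) ^ 2) y := by
  -- `2 D + (1 - 2y) D' = log (y/β) + log ((1-y)/(1-β)) = Λ`
  have hlogVarRatio : logVarRatio β y = log (y / β) + log ((1 - y) / (1 - β)) := by
    rw [logVarRatio, ← log_mul (div_ne_zero hy hβ) (div_ne_zero hy' hβ'), div_mul_div_comm]
  refine (((hasDerivAt_const y k).fun_div (hasDerivAt_one_sub_two_mul y) hc).fun_neg.fun_mul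
    (hasDerivAt_binKL hy hy' hβ hβ')).congr_deriv ?_
  rw [hlogVarRatio, binKL]
  field_simp
  ring

theorem hasDerivAt_neg_mul_logVarRatio_div_sq (hy : y ≠ 0) (hy' : 1 - y ≠ 0) (hβ : β ≠ 0)
    (hβ' : 1 - β ≠ 0) (hc : 1 - 2 * y ≠ 0) :
    HasDerivAt (fun t => -(k * logVarRatio β t) / (1 - 2 * t) ^ 2)
      (-k * (1 / (y * (1 - y) * (1 - 2 * y)) + 4 * logVarRatio β y / (1 - 2 * y) ^ 3)) y := by
  refine ((((hasDerivAt_logVarRatio hy hy' hβ hβ').const_mul k).fun_neg).fun_div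
    ((hasDerivAt_one_sub_two_mul y).fun_pow 2) (pow_ne_zero 2 hc)).congr_deriv ?_
  field_simp
  ring

end Derivatives

-- `g'(x)² + g''(x)` with `c = 1 - 2x`, `v = x(1-x)`, `L = Λ(x)`.
theorem sq_add_neg_mul_nonneg_of_le {c v L k : ℝ} (hc : 0 < c) (hv : 0 < v) (hL : 0 < L)
    (hk : 4 * c / L + c ^ 3 / (v * L ^ 2) ≤ k) :
    0 ≤ (-(k * L) / c ^ 2) ^ 2 + -k * (1 / (v * c) + 4 * L / c ^ 3) := by
  have hk₀ : 0 < k := lt_of_lt_of_le (by positivity) hk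
  have hmargin : 4 * c * L * v + c ^ 3 ≤ k * (L ^ 2 * v) := by
    calc 4 * c * L * v + c ^ 3 = (4 * c / L + c ^ 3 / (v * L ^ 2)) * (L ^ 2 * v) := by
          field_simp
      _ ≤ k * (L ^ 2 * v) := by gcongr
  have hfactor : (-(k * L) / c ^ 2) ^ 2 + -k * (1 / (v * c) + 4 * L / c ^ 3)
      = k / (c ^ 4 * v) * (k * (L ^ 2 * v) - (4 * c * L * v + c ^ 3)) := by
    field_simp
    ring
  rw [hfactor]
  exact mul_nonneg (by positivity) (by linarith)

/-- For `0 < β < x < 1/2` with `x(1-x) > β(1-β)` (so that `Λ(x) > 0`), the error bound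
`e(x) = exp(-(k/(1-2x)) D(B(x)‖B(β)))` is convex at `x` (its second derivative at `x` is
nonnegative) whenever `k ≥ 4(1-2x)/Λ(x) + (1-2x)³/(x(1-x)Λ(x)²)`,
where `Λ(x) = ln(x(1-x)/(β(1-β)))`. -/
theorem error_exponent_convexity_condition (β k x : ℝ) (hβ0 : 0 < β) (hβx : β < x)
    (hx : x < 1 / 2) (hΛ : β * (1 - β) < x * (1 - x))
    (hk : 4 * (1 - 2 * x) / Real.log (x * (1 - x) / (β * (1 - β))) +
            (1 - 2 * x) ^ 3 /
              (x * (1 - x) * (Real.log (x * (1 - x) / (β * (1 - β)))) ^ 2) ≤ k) :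
    0 ≤ deriv (deriv (fun y : ℝ => Real.exp (-(k / (1 - 2 * y)) * binKL y β))) x := by
  have hx0 : 0 < x := hβ0.trans hβx
  have hβ1 : 1 - β ≠ 0 := by linarith
  have hexponent : ∀ᶠ y in 𝓝 x, HasDerivAt (fun t => -(k / (1 - 2 * t)) * binKL t β)
      (-(k * logVarRatio β y) / (1 - 2 * y) ^ 2) y := by
    filter_upwards [Ioo_mem_nhds hx0 hx] with y ⟨hy0, hy⟩
    exact hasDerivAt_neg_div_mul_binKL hy0.ne' (by linarith) hβ0.ne' hβ1 (by linarith)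
  rw [deriv_deriv_exp_comp hexponent
    (hasDerivAt_neg_mul_logVarRatio_div_sq hx0.ne' (by linarith) hβ0.ne' hβ1 (by linarith))]
  have hL : 0 < logVarRatio β x := log_pos ((one_lt_div (by nlinarith)).mpr hΛ)
  exact mul_nonneg (exp_pos _).le (sq_add_neg_mul_nonneg_of_le (by linarith) (by nlinarith) hL hk)
end

section
/- For 0 < β < 1/2 and k, λ > 0, define L(x) = (k/(1-2x)) D(B(x)‖B(β)) and R(x) = ln((λ + Λ(x))/λ) with Λ(x) = ln(x(1-x)/(β(1-β))). On the interval (β, 1/2), the equation L(x) = R(x) has exactly one solution, given that L is strictly convex increasing with L(β) = 0, and R is strictly concave increasing with R(β) = 0. -/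
/-- `Λ(x) = ln(x(1-x)/(β(1-β)))`. -/
noncomputable def Lam (β x : ℝ) : ℝ := Real.log (x * (1 - x) / (β * (1 - β)))

/-! Put `g = L - R`. It is strictly convex on `[β, 1/2)` and vanishes at `β`, so it has at most
one further zero there. Since `D(B(·)‖B(β))` has a double zero at `β`, `L'(β) = 0` while
`R'(β) = (1 - 2β) / (β (1 - β) λ) > 0`, so `g` becomes negative just to the right of `β`. As
`x → 1/2⁻` the factor `k / (1 - 2x)` blows up while `D(B(1/2)‖B(β)) = Λ(1/2) / 2 > 0` and `R`
stays bounded, so `g → +∞`. Being convex, `g` is continuous on `(β, 1/2)`, and the intermediate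
value theorem produces the zero. -/

open Real Set Filter Topology

theorem StrictConvexOn.eq_of_apply_eq_of_lt {𝕜 : Type*} [Field 𝕜] [LinearOrder 𝕜]
    [IsStrictOrderedRing 𝕜] {s : Set 𝕜} {f : 𝕜 → 𝕜} (hf : StrictConvexOn 𝕜 s f) {a x y : 𝕜}
    (ha : a ∈ s) (hx : x ∈ s) (hy : y ∈ s) (hax : a < x) (hay : a < y)
    (hfx : f x = f a) (hfy : f y = f a) : x = y := by
  have hnlt : ∀ {u v : 𝕜}, u ∈ s → v ∈ s → a < u → f u = f a → f v = f a → ¬u < v :=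
    fun hu hv hau hfu hfv huv => by
      have := hf.lt_on_openSegment ha hv (hau.trans huv).ne
        (by rw [openSegment_eq_Ioo (hau.trans huv)]; exact ⟨hau, huv⟩)
      simp [hfu, hfv] at this
  exact le_antisymm (not_lt.1 (hnlt hy hx hay hfy hfx)) (not_lt.1 (hnlt hx hy hax hfx hfy))

theorem HasDerivAt.exists_mem_Ioo_lt_of_neg {g : ℝ → ℝ} {g' a b : ℝ} (hd : HasDerivAt g g' a)
    (hneg : g' < 0) (hab : a < b) : ∃ x ∈ Ioo a b, g x < g a := by
  have hslope : ∀ᶠ x in 𝓝[>] a, slope g a x < 0 :=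
    hd.hasDerivWithinAt.limsup_slope_le' (lt_irrefl a) hneg
  obtain ⟨x, hx, hxab⟩ := (hslope.and (Ioo_mem_nhdsGT hab)).exists
  refine ⟨x, hxab, ?_⟩
  rw [slope_def_field, div_neg_iff] at hx
  rcases hx with ⟨-, hx⟩ | ⟨hx, -⟩
  · linarith [hxab.1]
  · linarith

theorem exists_mem_Ioo_eq_of_hasDerivAt_neg_of_tendsto_atTop {g : ℝ → ℝ} {g' a b : ℝ}
    (hab : a < b) (hg : ContinuousOn g (Ioo a b)) (hd : HasDerivAt g g' a) (hneg : g' < 0)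
    (htop : Tendsto g (𝓝[<] b) atTop) : ∃ x ∈ Ioo a b, g x = g a := by
  obtain ⟨x₁, hx₁, hgx₁⟩ := hd.exists_mem_Ioo_lt_of_neg hneg hab
  obtain ⟨x₂, hgx₂, hx₂⟩ :=
    ((htop.eventually_ge_atTop (g a)).and (Ioo_mem_nhdsLT hab)).exists
  exact isPreconnected_Ioo.intermediate_value hx₁ hx₂ hg ⟨hgx₁.le, hgx₂⟩

theorem binKL_self (β : ℝ) : binKL β β = 0 := by
  simp [binKL, Real.log_div_self]

theorem hasDerivAt_binKL_s12 {x β : ℝ} (hx0 : x ≠ 0) (hx1 : x ≠ 1) (hβ0 : β ≠ 0) (hβ1 : β ≠ 1) :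
    HasDerivAt (binKL · β) (log (x / β) - log ((1 - x) / (1 - β))) x := by
  have h1x : 1 - x ≠ 0 := sub_ne_zero.2 (Ne.symm hx1)
  have h1β : 1 - β ≠ 0 := sub_ne_zero.2 (Ne.symm hβ1)
  have hu : HasDerivAt (fun y => y / β) (1 / β) x := (hasDerivAt_id' x).div_const β
  have hv : HasDerivAt (fun y => (1 - y) / (1 - β)) (-1 / (1 - β)) x := by
    simpa using ((hasDerivAt_id' x).const_sub 1).div_const (1 - β)
  show HasDerivAt (fun y => y * log (y / β) + (1 - y) * log ((1 - y) / (1 - β))) _ x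
  have := ((hasDerivAt_id' x).mul (hu.log (div_ne_zero hx0 hβ0))).add
    (((hasDerivAt_id' x).const_sub 1).mul (hv.log (div_ne_zero h1x h1β)))
  refine this.congr_deriv ?_
  field_simp
  ring

theorem Lam_self (β : ℝ) : Lam β β = 0 := by
  simp [Lam, Real.log_div_self]

theorem hasDerivAt_Lam {β x : ℝ} (hx0 : x ≠ 0) (hx1 : x ≠ 1) (hβ0 : β ≠ 0) (hβ1 : β ≠ 1) :
    HasDerivAt (Lam β) ((1 - 2 * x) / (x * (1 - x))) x := by
  have h1x : 1 - x ≠ 0 := sub_ne_zero.2 (Ne.symm hx1)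
  have h1β : 1 - β ≠ 0 := sub_ne_zero.2 (Ne.symm hβ1)
  have hu : HasDerivAt (fun y => y * (1 - y) / (β * (1 - β)))
      ((1 - 2 * x) / (β * (1 - β))) x := by
    refine (((hasDerivAt_id' x).mul ((hasDerivAt_id' x).const_sub 1)).div_const _).congr_deriv ?_
    ring
  refine (hu.log (by simp [*])).congr_deriv ?_
  field_simp

theorem Lam_half_pos {β : ℝ} (hβ0 : 0 < β) (hβ1 : β < 1) (hβ : β ≠ 1 / 2) :
    0 < Lam β (1 / 2) := by
  have hβ' : 0 < β * (1 - β) := mul_pos hβ0 (sub_pos.2 hβ1)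
  refine Real.log_pos ((one_lt_div hβ').2 ?_)
  nlinarith [sq_pos_of_ne_zero (sub_ne_zero.2 hβ)]

theorem binKL_half {β : ℝ} (hβ0 : β ≠ 0) (hβ1 : β ≠ 1) :
    binKL (1 / 2) β = Lam β (1 / 2) / 2 := by
  have h1β : 1 - β ≠ 0 := sub_ne_zero.2 (Ne.symm hβ1)
  have hsplit : (1 / 2 : ℝ) * (1 / 2) / (β * (1 - β)) = 1 / 2 / β * (1 / 2 / (1 - β)) := by
    field_simp
  rw [binKL, Lam, show (1 : ℝ) - 1 / 2 = 1 / 2 by norm_num, hsplit,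
    Real.log_mul (by simpa) (by simpa)]
  ring

-- `L(x)` and `R(x)` of the paper.
noncomputable def kktLhs (k β x : ℝ) : ℝ := k / (1 - 2 * x) * binKL x β

noncomputable def kktRhs (lam β x : ℝ) : ℝ := log ((lam + Lam β x) / lam)

theorem hasDerivAt_kktLhs_self (k : ℝ) {β : ℝ} (hβ0 : β ≠ 0) (hβ1 : β ≠ 1)
    (hβ : 1 - 2 * β ≠ 0) : HasDerivAt (kktLhs k β) 0 β := by
  have hfac : HasDerivAt (fun x => k / (1 - 2 * x)) (k * 2 / (1 - 2 * β) ^ 2) β := by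
    refine ((hasDerivAt_const β k).div
      ((hasDerivAt_id' β).const_mul 2 |>.const_sub 1) hβ).congr_deriv ?_
    ring
  refine (hfac.mul (hasDerivAt_binKL_s12 hβ0 hβ1 hβ0 hβ1)).congr_deriv ?_
  simp [binKL_self, Real.log_div_self]

theorem hasDerivAt_kktRhs_self {lam β : ℝ} (hlam : lam ≠ 0) (hβ0 : β ≠ 0) (hβ1 : β ≠ 1) :
    HasDerivAt (kktRhs lam β) ((1 - 2 * β) / (β * (1 - β)) / lam) β := by
  have hv := ((hasDerivAt_Lam hβ0 hβ1 hβ0 hβ1).const_add lam).div_const lam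
  refine (hv.log (by simp [Lam_self, hlam])).congr_deriv ?_
  simp [Lam_self, hlam]

theorem continuousAt_kktRhs {lam β x : ℝ} (hlam : lam ≠ 0) (hΛ : lam + Lam β x ≠ 0)
    (hx0 : x ≠ 0) (hx1 : x ≠ 1) (hβ0 : β ≠ 0) (hβ1 : β ≠ 1) : ContinuousAt (kktRhs lam β) x :=
  (((hasDerivAt_Lam hx0 hx1 hβ0 hβ1).continuousAt.const_add lam).div_const lam).log
    (div_ne_zero hΛ hlam)

theorem tendsto_kktLhs_atTop {k β : ℝ} (hk : 0 < k) (hβ0 : 0 < β) (hβ1 : β < 1)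
    (hβ : β ≠ 1 / 2) : Tendsto (kktLhs k β) (𝓝[<] (1 / 2)) atTop := by
  have hden : Tendsto (fun x : ℝ => 1 - 2 * x) (𝓝[<] (1 / 2)) (𝓝[>] 0) := by
    refine tendsto_nhdsWithin_of_tendsto_nhds_of_eventually_within _ ?_ ?_
    · have : Tendsto (fun x : ℝ => 1 - 2 * x) (𝓝 (1 / 2)) (𝓝 (1 - 2 * (1 / 2))) :=
        (continuous_const.sub (continuous_const.mul continuous_id)).tendsto _
      simpa using this.mono_left nhdsWithin_le_nhds
    · filter_upwards [self_mem_nhdsWithin] with x (hx : x < 1 / 2)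
      simp only [mem_Ioi]
      linarith
  have hnum : Tendsto (fun x => k * binKL x β) (𝓝[<] (1 / 2)) (𝓝 (k * binKL (1 / 2) β)) :=
    ((hasDerivAt_binKL_s12 (by norm_num) (by norm_num) hβ0.ne' hβ1.ne).continuousAt.tendsto.const_mul
      k).mono_left nhdsWithin_le_nhds
  have hpos : 0 < k * binKL (1 / 2) β := by
    rw [binKL_half hβ0.ne' hβ1.ne]
    have := Lam_half_pos hβ0 hβ1 hβ
    positivity
  refine (hden.inv_tendsto_nhdsGT_zero.atTop_mul_pos hpos hnum).congr fun x => ?_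
  simp only [kktLhs, Pi.inv_apply]
  ring

theorem kkt_equation_unique_solution_general (β k lam : ℝ) (hβ0 : 0 < β) (hβ : β < 1 / 2)
    (hk : 0 < k) (hlam : 0 < lam)
    (hLconv : StrictConvexOn ℝ (Set.Ico β (1 / 2))
      (fun x => k / (1 - 2 * x) * binKL x β))
    (hRconc : StrictConcaveOn ℝ (Set.Ico β (1 / 2))
      (fun x => Real.log ((lam + Lam β x) / lam))) :
    ∃! x : ℝ, x ∈ Set.Ioo β (1 / 2) ∧
      k / (1 - 2 * x) * binKL x β = Real.log ((lam + Lam β x) / lam) := by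
  have hβ1 : β < 1 := by linarith
  have hβ2 : 0 < 1 - 2 * β := by linarith
  set g := kktLhs k β - kktRhs lam β
  have hconv : StrictConvexOn ℝ (Ico β (1 / 2)) g := hLconv.sub hRconc
  have hgβ : g β = 0 := by simp [g, kktLhs, kktRhs, binKL_self, Lam_self, hlam.ne']
  have hcont : ContinuousOn g (Ioo β (1 / 2)) := by
    simpa only [interior_Ico] using hconv.convexOn.continuousOn_interior
  have hderiv : HasDerivAt g (-((1 - 2 * β) / (β * (1 - β)) / lam)) β :=
    ((hasDerivAt_kktLhs_self k hβ0.ne' hβ1.ne hβ2.ne').sub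
      (hasDerivAt_kktRhs_self hlam.ne' hβ0.ne' hβ1.ne)).congr_deriv (zero_sub _)
  have hneg : -((1 - 2 * β) / (β * (1 - β)) / lam) < 0 := by
    have : 0 < β * (1 - β) := mul_pos hβ0 (sub_pos.2 hβ1)
    exact neg_neg_of_pos (by positivity)
  have htop : Tendsto g (𝓝[<] (1 / 2)) atTop := by
    have hR : ContinuousAt (kktRhs lam β) (1 / 2) :=
      continuousAt_kktRhs hlam.ne' (by linarith [Lam_half_pos hβ0 hβ1 hβ.ne]) (by norm_num)
        (by norm_num) hβ0.ne' hβ1.ne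
    exact ((tendsto_kktLhs_atTop hk hβ0 hβ1 hβ.ne).atTop_add
      (hR.tendsto.neg.mono_left nhdsWithin_le_nhds)).congr fun x => (sub_eq_add_neg _ _).symm
  obtain ⟨x, hx, hgx⟩ :=
    exists_mem_Ioo_eq_of_hasDerivAt_neg_of_tendsto_atTop hβ hcont hderiv hneg htop
  refine ⟨x, ⟨hx, sub_eq_zero.1 (hgx.trans hgβ)⟩, fun y ⟨hy, hLR⟩ => ?_⟩
  exact hconv.eq_of_apply_eq_of_lt (left_mem_Ico.2 hβ) (Ioo_subset_Ico_self hy)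
    (Ioo_subset_Ico_self hx) hy.1 hx.1 ((sub_eq_zero.2 hLR).trans hgβ.symm) hgx

/-- For `0 < β < 1/2` and `k, λ > 0`, set `L(x) = (k/(1-2x)) D(B(x)‖B(β))` and
`R(x) = ln((λ + Λ(x))/λ)` with `Λ(x) = ln(x(1-x)/(β(1-β)))`. Given that `L` is a strictly
convex increasing function with `L(β) = 0` and `R` is a strictly concave increasing function
with `R(β) = 0`, the equation `L(x) = R(x)` has exactly one solution in `(β, 1/2)`. -/
theorem kkt_equation_unique_solution (β k lam : ℝ) (hβ0 : 0 < β) (hβ : β < 1 / 2)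
    (hk : 0 < k) (hlam : 0 < lam)
    (hLconv : StrictConvexOn ℝ (Set.Ico β (1 / 2))
      (fun x => k / (1 - 2 * x) * binKL x β))
    (hLmono : StrictMonoOn (fun x => k / (1 - 2 * x) * binKL x β) (Set.Ico β (1 / 2)))
    (hL0 : k / (1 - 2 * β) * binKL β β = 0)
    (hRconc : StrictConcaveOn ℝ (Set.Ico β (1 / 2))
      (fun x => Real.log ((lam + Lam β x) / lam)))
    (hRmono : StrictMonoOn (fun x => Real.log ((lam + Lam β x) / lam)) (Set.Ico β (1 / 2)))
    (hR0 : Real.log ((lam + Lam β β) / lam) = 0) :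
    ∃! x : ℝ, x ∈ Set.Ioo β (1 / 2) ∧
      k / (1 - 2 * x) * binKL x β = Real.log ((lam + Lam β x) / lam) :=
  kkt_equation_unique_solution_general β k lam hβ0 hβ hk hlam hLconv hRconc
end
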